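/- If the strict Hall-type condition Σ_{x∈D} α_x < Σ_{y∈N(D)} β_y holds for all nonempty D ⊆ X, then the graph L on the set of complete allocation states, whose edges connect W and W' = W − e_{xy} + e_{xy'} (with W_{xy} > 0, y' ∈ N_x, W_{y'} < β_{y'}), is connected. -/

import Mathlib

open Finset

def col {X : Type*} [Fintype X] (W : X → X → ℕ) (y : X) : ℕ := ∑ x, W x y

def Nout {X : Type*} [Fintype X] [DecidableEq X] (E : X → X → Prop) [DecidableRel E]
    (D : Finset X) : Finset X :=
  D.biUnion (fun x => Finset.univ.filter (fun y => E x y))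

def move {X : Type*} [DecidableEq X] (W : X → X → ℕ) (x y y' : X) : X → X → ℕ :=
  fun a b => (W a b + (if a = x ∧ b = y' then 1 else 0)) - (if a = x ∧ b = y then 1 else 0)

/-- A distribution move: unit `x` moves one atom from `y` to an available resource `y'`. -/
def DistMove {X : Type*} [Fintype X] [DecidableEq X] (E : X → X → Prop) (β : X → ℕ)
    (W W' : X → X → ℕ) : Prop :=
  ∃ x y y', 0 < W x y ∧ E x y' ∧ col W y' < β y' ∧ W' = move W x y y'

section Aux

variable {X : Type*} [Fintype X] [DecidableEq X]

/- ### sum helpers -/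

lemma sum_change_one {M : Type*} [AddCommGroup M] (F G : X → M) (x : X)
    (h : ∀ u, u ≠ x → F u = G u) :
    ∑ u, F u = (∑ u, G u) + (F x - G x) := by
  have hs : ∑ u, (F u - G u) = F x - G x :=
    Finset.sum_eq_single x (fun u _ hu => by rw [h u hu]; abel) (fun h' => absurd (mem_univ x) h')
  have h2 := Finset.sum_sub_distrib (s := (Finset.univ : Finset X)) (f := F) (g := G)
  rw [hs] at h2
  rw [h2]; abel

lemma sum_change_two {M : Type*} [AddCommGroup M] (F G : X → M) (y y' : X) (hne : y ≠ y')
    (h : ∀ w, w ≠ y → w ≠ y' → F w = G w) :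
    ∑ w, F w = (∑ w, G w) + (F y - G y) + (F y' - G y') := by
  have hs : ∑ w, (F w - G w) = (F y - G y) + (F y' - G y') := by
    have hsub : (({y, y'} : Finset X)) ⊆ Finset.univ := Finset.subset_univ _
    have hvan : ∀ w ∈ Finset.univ, w ∉ ({y, y'} : Finset X) → F w - G w = 0 := by
      intro w _ hw
      simp only [Finset.mem_insert, Finset.mem_singleton] at hw
      push_neg at hw
      rw [h w hw.1 hw.2]; abel
    rw [← Finset.sum_subset hsub hvan, Finset.sum_pair hne]
  have h2 := Finset.sum_sub_distrib (s := (Finset.univ : Finset X)) (f := F) (g := G)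
  rw [hs] at h2
  rw [add_assoc, h2]; abel

/- ### move cell lemmas -/

variable {W : X → X → ℕ} {x y y' : X}

lemma move_self (W : X → X → ℕ) (x y : X) : move W x y y = W := by
  funext a b
  simp only [move]
  split_ifs <;> omega

lemma move_src (h1 : 1 ≤ W x y) (hne : y ≠ y') : move W x y y' x y + 1 = W x y := by
  simp only [move]
  split_ifs with h h' <;> simp_all <;> omega

lemma move_tgt (hne : y ≠ y') : move W x y y' x y' = W x y' + 1 := by
  simp only [move]
  split_ifs with h h' <;> simp_all

lemma move_other {a b : X} (h : a ≠ x ∨ (b ≠ y ∧ b ≠ y')) : move W x y y' a b = W a b := by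
  simp only [move]
  rcases h with h | ⟨h1, h2⟩ <;> split_ifs <;> simp_all <;> omega


/- ### column and row lemmas for move -/

lemma col_move_src (h1 : 1 ≤ W x y) (hne : y ≠ y') : col (move W x y y') y + 1 = col W y := by
  unfold col
  rw [Finset.sum_eq_sum_sdiff_singleton_add (Finset.mem_univ x) (fun u => move W x y y' u y),
    Finset.sum_eq_sum_sdiff_singleton_add (Finset.mem_univ x) (fun u => W u y)]
  have hc : ∀ u ∈ Finset.univ \ {x}, move W x y y' u y = W u y := by
    intro u hu
    simp only [Finset.mem_sdiff, Finset.mem_singleton] at hu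
    exact move_other (Or.inl hu.2)
  rw [Finset.sum_congr rfl hc]
  have := move_src h1 hne
  omega

lemma col_move_tgt (hne : y ≠ y') : col (move W x y y') y' = col W y' + 1 := by
  unfold col
  rw [Finset.sum_eq_sum_sdiff_singleton_add (Finset.mem_univ x) (fun u => move W x y y' u y'),
    Finset.sum_eq_sum_sdiff_singleton_add (Finset.mem_univ x) (fun u => W u y')]
  have hc : ∀ u ∈ Finset.univ \ {x}, move W x y y' u y' = W u y' := by
    intro u hu
    simp only [Finset.mem_sdiff, Finset.mem_singleton] at hu
    exact move_other (Or.inl hu.2)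
  rw [Finset.sum_congr rfl hc]
  have := move_tgt (W := W) (x := x) hne
  omega

lemma col_move_other {w : X} (hw1 : w ≠ y) (hw2 : w ≠ y') : col (move W x y y') w = col W w := by
  unfold col
  exact Finset.sum_congr rfl (fun u _ => move_other (Or.inr ⟨hw1, hw2⟩))

lemma row_move (h1 : 1 ≤ W x y) (a : X) : ∑ w, move W x y y' a w = ∑ w, W a w := by
  rcases eq_or_ne y y' with rfl | hne
  · rw [move_self]
  rcases eq_or_ne a x with rfl | ha
  · have hz : (((∑ w, (move W a y y' a w : ℤ)) : ℤ)) = ∑ w, (W a w : ℤ) := by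
      rw [sum_change_two (fun w => (move W a y y' a w : ℤ)) (fun w => (W a w : ℤ)) y y' hne
        (fun w hw1 hw2 => by
          show ((move W a y y' a w : ℕ) : ℤ) = ((W a w : ℕ) : ℤ)
          rw [move_other (Or.inr ⟨hw1, hw2⟩)])]
      have hsrc := move_src h1 hne
      have htgt := move_tgt (W := W) (x := a) hne
      have h1' : ((move W a y y' a y : ℤ)) = (W a y : ℤ) - 1 := by omega
      have h2' : ((move W a y y' a y' : ℤ)) = (W a y' : ℤ) + 1 := by omega
      rw [h1', h2']; ring
    exact_mod_cast hz
  · exact Finset.sum_congr rfl (fun w _ => move_other (Or.inl ha))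

/- ### validity -/

variable (E : X → X → Prop) (α β : X → ℕ)

def Valid (W : X → X → ℕ) : Prop :=
  (∀ x y, ¬ E x y → W x y = 0) ∧ (∀ x, ∑ y, W x y = α x) ∧ (∀ y, col W y ≤ β y)

variable {E α β}

lemma cell_le_col (W : X → X → ℕ) (u w : X) : W u w ≤ col W w :=
  Finset.single_le_sum (f := fun v => W v w) (fun _ _ => Nat.zero_le _) (Finset.mem_univ u)

lemma Valid.suppE (hV : Valid E α β W) {a b : X} (h : 0 < W a b) : E a b := by
  by_contra hc
  rw [hV.1 a b hc] at h
  omega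

lemma valid_move (hV : Valid E α β W) (h1 : 0 < W x y) (hE' : E x y')
    (hcol : col W y' < β y') : Valid E α β (move W x y y') := by
  rcases eq_or_ne y y' with rfl | hne
  · rwa [move_self]
  refine ⟨?_, ?_, ?_⟩
  · intro a b hab
    rcases eq_or_ne a x with rfl | ha
    · rcases eq_or_ne b y with rfl | hb
      · exact absurd (hV.suppE h1) hab
      rcases eq_or_ne b y' with rfl | hb'
      · exact absurd hE' hab
      · rw [move_other (Or.inr ⟨hb, hb'⟩)]; exact hV.1 a b hab
    · rw [move_other (Or.inl ha)]; exact hV.1 a b hab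
  · intro a; rw [row_move h1]; exact hV.2.1 a
  · intro w
    rcases eq_or_ne w y with rfl | hw1
    · have := col_move_src h1 hne
      have := hV.2.2 w
      omega
    rcases eq_or_ne w y' with rfl | hw2
    · rw [col_move_tgt hne]; omega
    · rw [col_move_other hw1 hw2]; exact hV.2.2 w

lemma valid_distMove (hV : Valid E α β W) {W' : X → X → ℕ} (h : DistMove E β W W') :
    Valid E α β W' := by
  obtain ⟨x, y, y', h1, hE', hcol, rfl⟩ := h
  exact valid_move hV h1 hE' hcol

lemma valid_reach {W W' : X → X → ℕ} (hV : Valid E α β W)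
    (h : Relation.ReflTransGen (DistMove E β) W W') : Valid E α β W' := by
  induction h with
  | refl => exact hV
  | tail _ hstep ih => exact valid_distMove ih hstep

lemma move_inv (h1 : 1 ≤ W x y) (hne : y ≠ y') : move (move W x y y') x y' y = W := by
  funext a b
  have hs := move_src h1 hne
  have ht := move_tgt (W := W) (x := x) hne
  rcases eq_or_ne a x with heq | ha
  · subst heq
    rcases eq_or_ne b y with heq | hb
    · subst heq
      have h2 := move_tgt (W := move W a b y') (x := a) (y := y') (y' := b) hne.symm
      omega
    rcases eq_or_ne b y' with heq | hb'
    · subst heq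
      have h2 := move_src (W := move W a y b) (x := a) (y := b) (y' := y) (by omega) hne.symm
      omega
    · rw [move_other (Or.inr ⟨hb', hb⟩), move_other (Or.inr ⟨hb, hb'⟩)]
  · rw [move_other (Or.inl ha), move_other (Or.inl ha)]

lemma distMove_symm (hV : Valid E α β W) {W' : X → X → ℕ} (h : DistMove E β W W') :
    DistMove E β W' W := by
  obtain ⟨x, y, y', h1, hE', hcol, rfl⟩ := h
  rcases eq_or_ne y y' with rfl | hne
  · rw [move_self]; exact ⟨x, y, y, h1, hE', hcol, (move_self W x y).symm⟩
  refine ⟨x, y', y, ?_, hV.suppE h1, ?_, (move_inv h1 hne).symm⟩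
  · rw [move_tgt hne]; omega
  · have := col_move_src h1 hne
    have := hV.2.2 y
    omega

lemma reach_symm {W W' : X → X → ℕ} (hV : Valid E α β W)
    (h : Relation.ReflTransGen (DistMove E β) W W') :
    Relation.ReflTransGen (DistMove E β) W' W := by
  induction h with
  | refl => exact Relation.ReflTransGen.refl
  | tail hsteps hstep ih =>
      have hvb := valid_reach hV hsteps
      exact Relation.ReflTransGen.trans
        (Relation.ReflTransGen.single (distMove_symm hvb hstep)) ih


/- ### the L1 distance between states -/

def delta (A B : X → X → ℕ) : ℕ := ∑ u, ∑ w, ((A u w : ℤ) - (B u w : ℤ)).natAbs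

lemma delta_comm (A B : X → X → ℕ) : delta A B = delta B A := by
  unfold delta
  refine Finset.sum_congr rfl (fun u _ => Finset.sum_congr rfl (fun w _ => ?_))
  omega

lemma delta_eq_zero {A B : X → X → ℕ} (h : delta A B = 0) : A = B := by
  funext u w
  unfold delta at h
  have h1 : ∀ u ∈ Finset.univ, (0:ℕ) ≤ ∑ w, ((A u w : ℤ) - (B u w : ℤ)).natAbs :=
    fun _ _ => Nat.zero_le _
  have h2 := (Finset.sum_eq_zero_iff_of_nonneg h1).mp h u (Finset.mem_univ u)
  have h3 := (Finset.sum_eq_zero_iff_of_nonneg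
    (fun w _ => Nat.zero_le (((A u w : ℤ) - (B u w : ℤ)).natAbs))).mp h2 w (Finset.mem_univ w)
  omega

lemma delta_cast (A B : X → X → ℕ) :
    (delta A B : ℤ) = ∑ u, ∑ w, (((A u w : ℤ) - (B u w : ℤ)).natAbs : ℤ) := by
  unfold delta
  push_cast
  rfl

/-- Change of `delta` under a single move on the left state. -/
lemma delta_move_left {A B : X → X → ℕ} {x y y' : X} (h1 : 1 ≤ A x y) (hne : y ≠ y') :
    (delta (move A x y y') B : ℤ) =
      (delta A B : ℤ) + (if B x y < A x y then -1 else 1) +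
        (if A x y' < B x y' then -1 else 1) := by
  rw [delta_cast, delta_cast]
  set F : X → X → ℤ := fun u w => (((move A x y y' u w : ℤ) - (B u w : ℤ)).natAbs : ℤ) with hF
  set G : X → X → ℤ := fun u w => (((A u w : ℤ) - (B u w : ℤ)).natAbs : ℤ) with hG
  have houter : ∀ u, u ≠ x → (∑ w, F u w) = ∑ w, G u w := by
    intro u hu
    refine Finset.sum_congr rfl (fun w _ => ?_)
    simp only [hF, hG, move_other (Or.inl hu)]
  have hx : (∑ w, F x w) = (∑ w, G x w) + (F x y - G x y) + (F x y' - G x y') := by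
    refine sum_change_two (F x) (G x) y y' hne (fun w hw1 hw2 => ?_)
    simp only [hF, hG, move_other (Or.inr ⟨hw1, hw2⟩)]
  have hsum := sum_change_one (fun u => ∑ w, F u w) (fun u => ∑ w, G u w) x houter
  rw [hsum, hx]
  have hs := move_src h1 hne
  have ht := move_tgt (W := A) (x := x) hne
  have hFy : F x y = (((A x y : ℤ) - 1 - (B x y : ℤ)).natAbs : ℤ) := by
    simp only [hF]; congr 1; omega
  have hFy' : F x y' = (((A x y' : ℤ) + 1 - (B x y' : ℤ)).natAbs : ℤ) := by
    simp only [hF]; congr 1; omega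
  rw [hFy, hFy']
  simp only [hG]
  split_ifs with hc1 hc2 hc2 <;> omega

/-- Mirrored moves on both states do not change `delta`. -/
lemma delta_mirror {A B : X → X → ℕ} {x y y' : X} (hA : 1 ≤ A x y) (hB : 1 ≤ B x y)
    (hne : y ≠ y') : delta (move A x y y') (move B x y y') = delta A B := by
  unfold delta
  refine Finset.sum_congr rfl (fun u _ => Finset.sum_congr rfl (fun w _ => ?_))
  rcases eq_or_ne u x with heq | hu
  · subst heq
    rcases eq_or_ne w y with heq | hw
    · subst heq
      have h1 := move_src hA hne
      have h2 := move_src hB hne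
      omega
    rcases eq_or_ne w y' with heq | hw'
    · subst heq
      have h1 := move_tgt (W := A) (x := u) hne
      have h2 := move_tgt (W := B) (x := u) hne
      omega
    · rw [move_other (Or.inr ⟨hw, hw'⟩), move_other (Or.inr ⟨hw, hw'⟩)]
  · rw [move_other (Or.inl hu), move_other (Or.inl hu)]

/-- Cellwise differences determine delta: mirrored moves preserve all differences. -/
lemma diff_mirror {A B : X → X → ℕ} {x y y' : X} (hA : 1 ≤ A x y) (hB : 1 ≤ B x y)
    (hne : y ≠ y') (u w : X) :
    ((move A x y y' u w : ℤ) - (move B x y y' u w : ℤ)) = (A u w : ℤ) - (B u w : ℤ) := by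
  rcases eq_or_ne u x with heq | hu
  · subst heq
    rcases eq_or_ne w y with heq | hw
    · subst heq
      have h1 := move_src hA hne
      have h2 := move_src hB hne
      omega
    rcases eq_or_ne w y' with heq | hw'
    · subst heq
      have h1 := move_tgt (W := A) (x := u) hne
      have h2 := move_tgt (W := B) (x := u) hne
      omega
    · rw [move_other (Or.inr ⟨hw, hw'⟩), move_other (Or.inr ⟨hw, hw'⟩)]
  · rw [move_other (Or.inl hu), move_other (Or.inl hu)]

/-- delta only depends on the cellwise differences. -/
lemma delta_congr_diff {A B A' B' : X → X → ℕ}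
    (h : ∀ u w, (A' u w : ℤ) - (B' u w : ℤ) = (A u w : ℤ) - (B u w : ℤ)) :
    delta A' B' = delta A B := by
  unfold delta
  refine Finset.sum_congr rfl (fun u _ => Finset.sum_congr rfl (fun w _ => ?_))
  rw [h u w]

/-- In a row with equal sums, a strict deficit somewhere gives a strict excess elsewhere. -/
lemma exists_excess {A B : X → X → ℕ} {u y : X} (hrow : ∑ w, A u w = ∑ w, B u w)
    (h : A u y < B u y) : ∃ z, z ≠ y ∧ B u z < A u z := by
  by_contra hc
  push_neg at hc
  have hlt : ∑ w, A u w < ∑ w, B u w := by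
    refine Finset.sum_lt_sum (fun w _ => ?_) ⟨y, Finset.mem_univ y, h⟩
    rcases eq_or_ne w y with rfl | hw
    · exact le_of_lt h
    · exact hc w hw
  omega

/-- If columns sums agree but some cell differs, there is a cell with a strict deficit. -/
lemma exists_col_deficit {A B : X → X → ℕ} {y : X} (hcol : col A y = col B y)
    {u₀ : X} (hne : A u₀ y ≠ B u₀ y) : ∃ u, A u y < B u y := by
  by_contra hc
  push_neg at hc
  have hlt : col B y < col A y := by
    unfold col
    exact Finset.sum_lt_sum (fun w _ => hc w) ⟨u₀, Finset.mem_univ u₀, by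
      have := hc u₀; omega⟩
  omega


/- ### saturated chains -/

variable (E β) in
/-- `chainP k y`: there is a chain of length `k` from resource `y` to an unsaturated
resource, stepping from a resource to any resource adjacent to a unit owning an atom there. -/
def chainP (A : X → X → ℕ) : ℕ → X → Prop
  | 0, y => col A y < β y
  | (k+1), y => col A y = β y ∧ ∃ x z, 0 < A x y ∧ E x z ∧ chainP A k z

variable [DecidableRel E]

/-- Key consequence of the Hall condition: every resource admits a saturated chain
to an unsaturated resource. -/
lemma chain_exists (hall : ∀ D : Finset X, D.Nonempty → ∑ x ∈ D, α x < ∑ y ∈ Nout E D, β y)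
    {A : X → X → ℕ} (hA : Valid E α β A) (ζ : X) (hβ : 0 < β ζ) :
    ∃ k, chainP E β A k ζ := by
  classical
  by_contra hcon
  push_neg at hcon
  set V : Finset X := Finset.univ.filter (fun w => ∀ k, ¬ chainP E β A k w) with hV
  have hζV : ζ ∈ V := Finset.mem_filter.mpr ⟨Finset.mem_univ ζ, hcon⟩
  have hmemV : ∀ w, w ∈ V → ∀ k, ¬ chainP E β A k w := by
    intro w hw; simpa [hV] using hw
  have hsat : ∀ w ∈ V, col A w = β w := by
    intro w hw
    have h0 := hmemV w hw 0
    have hle := hA.2.2 w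
    have : ¬ col A w < β w := h0
    omega
  have hclosed : ∀ w ∈ V, ∀ u, 0 < A u w → ∀ z, E u z → z ∈ V := by
    intro w hw u hu z hz
    simp only [hV, Finset.mem_filter, Finset.mem_univ, true_and]
    intro k hk
    exact hmemV w hw (k+1) ⟨hsat w hw, u, z, hu, hz, hk⟩
  set U : Finset X := Finset.univ.filter (fun u => ∃ w ∈ V, 0 < A u w) with hU
  have hUne : U.Nonempty := by
    have hcolζ : 0 < col A ζ := by rw [hsat ζ hζV]; exact hβ
    have : ∃ u, 0 < A u ζ := by
      by_contra hc
      push_neg at hc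
      have : col A ζ = 0 := Finset.sum_eq_zero (fun u _ => by have := hc u; omega)
      omega
    obtain ⟨u, hu⟩ := this
    refine ⟨u, ?_⟩
    simp only [hU, Finset.mem_filter, Finset.mem_univ, true_and]
    exact ⟨ζ, hζV, hu⟩
  have hkey := hall U hUne
  have hNout : Nout E U ⊆ V := by
    intro z hz
    simp only [Nout, Finset.mem_biUnion] at hz
    obtain ⟨u, huU, hzu⟩ := hz
    simp only [Finset.mem_filter, Finset.mem_univ, true_and] at hzu
    simp only [hU, Finset.mem_filter, Finset.mem_univ, true_and] at huU
    obtain ⟨w, hwV, hw⟩ := huU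
    exact hclosed w hwV u hw z hzu
  have hb1 : ∑ y ∈ Nout E U, β y ≤ ∑ w ∈ V, β w :=
    Finset.sum_le_sum_of_subset hNout
  have hb2 : ∑ w ∈ V, β w = ∑ w ∈ V, col A w :=
    Finset.sum_congr rfl (fun w hw => (hsat w hw).symm)
  have hb3 : ∑ w ∈ V, col A w = ∑ u ∈ U, ∑ w ∈ V, A u w := by
    unfold col
    rw [Finset.sum_comm]
    refine (Finset.sum_subset (Finset.subset_univ U) ?_).symm
    intro u _ hu
    simp only [hU, Finset.mem_filter, Finset.mem_univ, true_and] at hu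
    push_neg at hu
    exact Finset.sum_eq_zero (fun w hw => by have := hu w hw; omega)
  have hb4 : ∑ u ∈ U, ∑ w ∈ V, A u w ≤ ∑ u ∈ U, α u := by
    refine Finset.sum_le_sum (fun u _ => ?_)
    rw [← hA.2.1 u]
    exact Finset.sum_le_sum_of_subset (Finset.subset_univ V)
  omega


/- ### minimal pairs -/

variable (E β) in
/-- Reachability by distribution moves. -/
def Reach (W A : X → X → ℕ) : Prop := Relation.ReflTransGen (DistMove E β) W A

variable (E β) in
/-- A minimal pair of states reachable from `W1`, `W2` respectively. -/
def MinP (W1 W2 A B : X → X → ℕ) : Prop :=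
  Reach E β W1 A ∧ Reach E β W2 B ∧
    ∀ A' B', Reach E β W1 A' → Reach E β W2 B' → delta A B ≤ delta A' B'

variable {W1 W2 : X → X → ℕ}

lemma exists_minP : ∃ A B, MinP E β W1 W2 A B := by
  classical
  set S : Set ℕ := {n | ∃ A B, Reach E β W1 A ∧ Reach E β W2 B ∧ delta A B = n} with hS
  have hne : S.Nonempty :=
    ⟨delta W1 W2, W1, W2, Relation.ReflTransGen.refl, Relation.ReflTransGen.refl, rfl⟩
  obtain ⟨A, B, h1, h2, hd⟩ := Nat.sInf_mem hne
  refine ⟨A, B, h1, h2, fun A' B' h1' h2' => ?_⟩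
  rw [hd]
  exact Nat.sInf_le ⟨A', B', h1', h2', rfl⟩

lemma minP_of_eq {A B A₂ B₂ : X → X → ℕ} (hmin : MinP E β W1 W2 A B)
    (h1 : Reach E β W1 A₂) (h2 : Reach E β W2 B₂) (hd : delta A₂ B₂ = delta A B) :
    MinP E β W1 W2 A₂ B₂ :=
  ⟨h1, h2, fun A' B' h1' h2' => hd ▸ hmin.2.2 A' B' h1' h2'⟩

variable (hV1 : Valid E α β W1) (hV2 : Valid E α β W2)

section MinPair

variable {A B : X → X → ℕ} (hmin : MinP E β W1 W2 A B)

include hV1 hV2 hmin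

lemma MinP.validA : Valid E α β A := valid_reach hV1 hmin.1

lemma MinP.validB : Valid E α β B := valid_reach hV2 hmin.2.1

/-- In a minimal pair there is no deficit cell of `A` at an `A`-unsaturated resource. -/
lemma A_deficit_unsat {u y : X} (hd : A u y < B u y) (hcol : col A y < β y) : False := by
  have hVA := hmin.validA hV1 hV2
  have hVB := hmin.validB hV1 hV2
  have hrow : ∑ w, A u w = ∑ w, B u w := by rw [hVA.2.1 u, hVB.2.1 u]
  obtain ⟨z, hzy, hz⟩ := exists_excess hrow hd
  have hE : E u y := hVB.suppE (by omega)
  have hstep : DistMove E β A (move A u z y) := ⟨u, z, y, by omega, hE, hcol, rfl⟩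
  have hδ := delta_move_left (B := B) (show 1 ≤ A u z by omega) hzy
  rw [if_pos hz, if_pos hd] at hδ
  have hle := hmin.2.2 (move A u z y) B (hmin.1.tail hstep) hmin.2.1
  omega

/-- In a minimal pair there is no deficit cell of `B` at a `B`-unsaturated resource. -/
lemma B_deficit_unsat {u y : X} (hd : B u y < A u y) (hcol : col B y < β y) : False := by
  have hVA := hmin.validA hV1 hV2
  have hVB := hmin.validB hV1 hV2
  have hrow : ∑ w, B u w = ∑ w, A u w := by rw [hVA.2.1 u, hVB.2.1 u]
  obtain ⟨z, hzy, hz⟩ := exists_excess hrow hd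
  have hE : E u y := hVA.suppE (by omega)
  have hstep : DistMove E β B (move B u z y) := ⟨u, z, y, by omega, hE, hcol, rfl⟩
  have hδ := delta_move_left (A := B) (B := A) (show 1 ≤ B u z by omega) hzy
  rw [if_pos hz, if_pos hd] at hδ
  have hle := hmin.2.2 A (move B u z y) hmin.1 (hmin.2.1.tail hstep)
  have hc : delta A (move B u z y) = delta (move B u z y) A := delta_comm _ _
  have hc2 : delta A B = delta B A := delta_comm _ _
  omega

/-- In a minimal pair all column sums agree. -/
lemma cols_equal (y : X) : col A y = col B y := by
  have hVA := hmin.validA hV1 hV2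
  have hVB := hmin.validB hV1 hV2
  rcases lt_trichotomy (col A y) (col B y) with h | h | h
  · have hdef : ∃ u, A u y < B u y := by
      by_contra hc
      push_neg at hc
      have : col B y ≤ col A y := Finset.sum_le_sum (fun u _ => hc u)
      omega
    obtain ⟨u, hu⟩ := hdef
    exact absurd (A_deficit_unsat hV1 hV2 hmin hu (lt_of_lt_of_le h (hVB.2.2 y))) id
  · exact h
  · have hdef : ∃ u, B u y < A u y := by
      by_contra hc
      push_neg at hc
      have : col A y ≤ col B y := Finset.sum_le_sum (fun u _ => hc u)
      omega
    obtain ⟨u, hu⟩ := hdef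
    exact absurd (B_deficit_unsat hV1 hV2 hmin hu (lt_of_lt_of_le h (hVA.2.2 y))) id

/-- In a minimal pair, unsaturated columns agree cellwise. -/
lemma col_eq_unsat {y : X} (hcol : col A y < β y) (u : X) : A u y = B u y := by
  rcases lt_trichotomy (A u y) (B u y) with h | h | h
  · exact absurd (A_deficit_unsat hV1 hV2 hmin h hcol) id
  · exact h
  · have hc : col B y < β y := by
      have := cols_equal hV1 hV2 hmin y
      omega
    exact absurd (B_deficit_unsat hV1 hV2 hmin h hc) id

end MinPair

include hV1 hV2 in
/-- The mirrored vacating lemma: if all resources with saturated-chain complexity `≤ k`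
have equal columns, then a resource of complexity exactly `k` can be made unsaturated
in both states simultaneously, preserving all cellwise differences and all columns of
higher complexity. -/
lemma vacate (k : ℕ) :
    ∀ A B : X → X → ℕ, MinP E β W1 W2 A B →
      (∀ w, (∃ j ≤ k, chainP E β A j w) → ∀ u, A u w = B u w) →
      ∀ ζ, chainP E β A k ζ → (∀ j, j < k → ¬ chainP E β A j ζ) →
      ∃ A' B', MinP E β W1 W2 A' B' ∧
        (∀ u w, (A' u w : ℤ) - (B' u w : ℤ) = (A u w : ℤ) - (B u w : ℤ)) ∧
        col A' ζ < β ζ ∧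
        (∀ w, (¬ ∃ j ≤ k, chainP E β A j w) → ∀ u, A' u w = A u w ∧ B' u w = B u w) := by
  induction k with
  | zero =>
      intro A B hmin _ ζ hch _
      exact ⟨A, B, hmin, fun u w => rfl, hch, fun w _ u => ⟨rfl, rfl⟩⟩
  | succ k ih =>
      intro A B hmin hEq ζ hch hleast
      obtain ⟨hsat, x, ζ', hx, hE, hch'⟩ := hch
      have hleast' : ∀ j, j < k → ¬ chainP E β A j ζ' := by
        intro j hj hc
        exact hleast (j+1) (by omega) ⟨hsat, x, ζ', hx, hE, hc⟩
      have hEq' : ∀ w, (∃ j ≤ k, chainP E β A j w) → ∀ u, A u w = B u w := by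
        rintro w ⟨j, hj, hc⟩ u
        exact hEq w ⟨j, by omega, hc⟩ u
      obtain ⟨A₁, B₁, hmin₁, hdiff₁, hcol₁, hunch₁⟩ := ih A B hmin hEq' ζ' hch' hleast'
      have hζnot : ¬ ∃ j ≤ k, chainP E β A j ζ := by
        rintro ⟨j, hj, hc⟩
        exact hleast j (by omega) hc
      have hcolunch := hunch₁ ζ hζnot
      have hcolA₁ζ : col A₁ ζ = col A ζ :=
        Finset.sum_congr rfl (fun u _ => (hcolunch u).1)
      have hxA₁ : 0 < A₁ x ζ := by rw [(hcolunch x).1]; exact hx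
      have hxB₁ : B₁ x ζ = A₁ x ζ := by
        rw [(hcolunch x).2, (hcolunch x).1]
        exact (hEq ζ ⟨k+1, le_refl _, ⟨hsat, x, ζ', hx, hE, hch'⟩⟩ x).symm
      have hζne : ζ ≠ ζ' := by
        intro h
        exact hleast k (by omega) (h ▸ hch')
      have hcolB₁ζ' : col B₁ ζ' < β ζ' := by
        rw [← cols_equal hV1 hV2 hmin₁ ζ']
        exact hcol₁
      have hstepA : DistMove E β A₁ (move A₁ x ζ ζ') := ⟨x, ζ, ζ', hxA₁, hE, hcol₁, rfl⟩
      have hstepB : DistMove E β B₁ (move B₁ x ζ ζ') := ⟨x, ζ, ζ', by omega, hE, hcolB₁ζ', rfl⟩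
      have hδeq : delta (move A₁ x ζ ζ') (move B₁ x ζ ζ') = delta A B := by
        rw [delta_mirror hxA₁ (by omega) hζne]
        exact (delta_congr_diff hdiff₁)
      refine ⟨move A₁ x ζ ζ', move B₁ x ζ ζ',
        minP_of_eq hmin (hmin₁.1.tail hstepA) (hmin₁.2.1.tail hstepB) hδeq, ?_, ?_, ?_⟩
      · intro u w
        rw [diff_mirror hxA₁ (by omega) hζne u w]
        exact hdiff₁ u w
      · have := col_move_src (W := A₁) (x := x) hxA₁ hζne
        rw [hcolA₁ζ] at this
        omega
      · intro w hw u
        have hwk : ¬ ∃ j ≤ k, chainP E β A j w := by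
          rintro ⟨j, hj, hc⟩
          exact hw ⟨j, by omega, hc⟩
        have hwζ : w ≠ ζ := by
          intro h
          exact hw ⟨k+1, le_refl _, h ▸ ⟨hsat, x, ζ', hx, hE, hch'⟩⟩
        have hwζ' : w ≠ ζ' := by
          intro h
          exact hw ⟨k, by omega, h ▸ hch'⟩
        constructor
        · rw [move_other (Or.inr ⟨hwζ, hwζ'⟩)]
          exact (hunch₁ w hwk u).1
        · rw [move_other (Or.inr ⟨hwζ, hwζ'⟩)]
          exact (hunch₁ w hwk u).2


include hV1 hV2 in
/-- Main induction: in a minimal pair, every column of saturated-chain complexity `n`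
is equal in the two states. -/
lemma column_eq : ∀ n : ℕ, ∀ A B : X → X → ℕ, MinP E β W1 W2 A B →
    ∀ y, chainP E β A n y → (∀ j, j < n → ¬ chainP E β A j y) →
    ∀ u, A u y = B u y := by
  intro n
  induction n using Nat.strong_induction_on with
  | _ n IH =>
    match n with
    | 0 =>
        intro A B hmin y hch _ u
        exact col_eq_unsat hV1 hV2 hmin hch u
    | (m+1) =>
        intro A B hmin y hch hleast u₀
        classical
        obtain ⟨hsat, x₁, ζ₁, hx₁, hE₁, hch₁⟩ := hch
        have hleast₁ : ∀ j, j < m → ¬ chainP E β A j ζ₁ := by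
          intro j hj hc
          exact hleast (j+1) (by omega) ⟨hsat, x₁, ζ₁, hx₁, hE₁, hc⟩
        have hEq : ∀ w, (∃ j ≤ m, chainP E β A j w) → ∀ u, A u w = B u w := by
          rintro w ⟨j, hj, hc⟩ u
          have hnon : ∃ i, chainP E β A i w := ⟨j, hc⟩
          set d := Nat.find hnon with hd
          have hchd : chainP E β A d w := Nat.find_spec hnon
          have hdle : d ≤ j := Nat.find_min' hnon hc
          have hdl : ∀ i, i < d → ¬ chainP E β A i w := fun i hi => Nat.find_min hnon hi
          exact IH d (by omega) A B hmin w hchd hdl u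
        obtain ⟨A', B', hmin', hdiff, hcolζ₁, hunch⟩ :=
          vacate hV1 hV2 m A B hmin hEq ζ₁ hch₁ hleast₁
        have hynot : ¬ ∃ j ≤ m, chainP E β A j y := by
          rintro ⟨j, hj, hc⟩
          exact hleast j (by omega) hc
        have hyunch := hunch y hynot
        -- column y is untouched
        have hcolA'y : col A' y = col A y := Finset.sum_congr rfl (fun u _ => (hyunch u).1)
        have hcolB'y : col B' y = col B y := Finset.sum_congr rfl (fun u _ => (hyunch u).2)
        have hcolAB : col A y = col B y := cols_equal hV1 hV2 hmin y
        -- suppose the column differs; derive False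
        by_contra hne₀
        have hdef : ∃ u, A u y < B u y := exists_col_deficit hcolAB hne₀
        obtain ⟨u_d, hud⟩ := hdef
        -- the chain atom's cell in column y, and the target cell at ζ₁ is equal
        have htgt_eq : A' x₁ ζ₁ = B' x₁ ζ₁ := by
          have h1 : A x₁ ζ₁ = B x₁ ζ₁ := hEq ζ₁ ⟨m, le_refl _, hch₁⟩ x₁
          have h2 := hdiff x₁ ζ₁
          omega
        have hx₁A' : 0 < A' x₁ y := by rw [(hyunch x₁).1]; exact hx₁
        have hζ₁y : y ≠ ζ₁ := by
          intro h
          exact hleast m (by omega) (h ▸ hch₁)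
        rcases lt_trichotomy (A x₁ y) (B x₁ y) with hcell | hcell | hcell
        · -- deficit at the chain atom: move on the B side
          have hx₁B' : 0 < B' x₁ y := by
            rw [(hyunch x₁).2]
            omega
          have hcolB'ζ₁ : col B' ζ₁ < β ζ₁ := by
            rw [← cols_equal hV1 hV2 hmin' ζ₁]
            exact hcolζ₁
          have hstep : DistMove E β B' (move B' x₁ y ζ₁) :=
            ⟨x₁, y, ζ₁, hx₁B', hE₁, hcolB'ζ₁, rfl⟩
          have hδ := delta_move_left (A := B') (B := A') (show 1 ≤ B' x₁ y by omega) hζ₁y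
          have hsrc : A' x₁ y < B' x₁ y := by
            have h1 := (hyunch x₁).1
            have h2 := (hyunch x₁).2
            omega
          rw [if_pos hsrc, if_neg (by omega : ¬ B' x₁ ζ₁ < A' x₁ ζ₁)] at hδ
          -- new pair (A', move B' x₁ y ζ₁) is minimal
          have hδAB : delta A' B' = delta A B := delta_congr_diff hdiff
          have hδ2 : delta A' (move B' x₁ y ζ₁) = delta A B := by
            have hc1 : delta A' (move B' x₁ y ζ₁) = delta (move B' x₁ y ζ₁) A' :=
              delta_comm _ _
            have hc2 : delta B' A' = delta A' B' := delta_comm _ _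
            omega
          have hmin'' := minP_of_eq hmin hmin'.1 (hmin'.2.1.tail hstep) hδ2
          -- but then column sums at y disagree
          have hc := cols_equal hV1 hV2 hmin'' y
          have hcm := col_move_src (W := B') (x := x₁) (show 1 ≤ B' x₁ y by omega) hζ₁y
          rw [hcolA'y, hcolAB] at hc
          rw [hcolB'y] at hcm
          omega
        · -- equal cell: mirror the move on both sides
          have hx₁B' : 0 < B' x₁ y := by
            rw [(hyunch x₁).2]
            omega
          have hcolB'ζ₁ : col B' ζ₁ < β ζ₁ := by
            rw [← cols_equal hV1 hV2 hmin' ζ₁]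
            exact hcolζ₁
          have hstepA : DistMove E β A' (move A' x₁ y ζ₁) :=
            ⟨x₁, y, ζ₁, hx₁A', hE₁, hcolζ₁, rfl⟩
          have hstepB : DistMove E β B' (move B' x₁ y ζ₁) :=
            ⟨x₁, y, ζ₁, hx₁B', hE₁, hcolB'ζ₁, rfl⟩
          have hδeq : delta (move A' x₁ y ζ₁) (move B' x₁ y ζ₁) = delta A B := by
            rw [delta_mirror hx₁A' hx₁B' hζ₁y]
            exact delta_congr_diff hdiff
          have hmin'' := minP_of_eq hmin (hmin'.1.tail hstepA) (hmin'.2.1.tail hstepB) hδeq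
          -- deficit cell (u_d, y) persists, now at an unsaturated column
          have hud_ne : u_d ≠ x₁ := by
            intro h
            rw [h] at hud
            omega
          have hcellA : move A' x₁ y ζ₁ u_d y = A u_d y := by
            rw [move_other (Or.inl hud_ne)]
            exact (hyunch u_d).1
          have hcellB : move B' x₁ y ζ₁ u_d y = B u_d y := by
            rw [move_other (Or.inl hud_ne)]
            exact (hyunch u_d).2
          have hcm := col_move_src (W := A') (x := x₁) (y := y) (y' := ζ₁) (by omega) hζ₁y
          have hsaty : col A y = β y := hsat
          refine A_deficit_unsat hV1 hV2 hmin'' (u := u_d) (y := y) ?_ ?_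
          · omega
          · omega
        · -- excess at the chain atom: move on the A side only
          have hstepA : DistMove E β A' (move A' x₁ y ζ₁) :=
            ⟨x₁, y, ζ₁, hx₁A', hE₁, hcolζ₁, rfl⟩
          have hδ := delta_move_left (A := A') (B := B') (show 1 ≤ A' x₁ y by omega) hζ₁y
          have hsrc : B' x₁ y < A' x₁ y := by
            have h1 := (hyunch x₁).1
            have h2 := (hyunch x₁).2
            omega
          rw [if_pos hsrc, if_neg (by omega : ¬ A' x₁ ζ₁ < B' x₁ ζ₁)] at hδ
          have hδAB : delta A' B' = delta A B := delta_congr_diff hdiff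
          have hδ2 : delta (move A' x₁ y ζ₁) B' = delta A B := by omega
          have hmin'' := minP_of_eq hmin (hmin'.1.tail hstepA) hmin'.2.1 hδ2
          have hc := cols_equal hV1 hV2 hmin'' y
          have hcm := col_move_src (W := A') (x := x₁) (show 1 ≤ A' x₁ y by omega) hζ₁y
          rw [hcolA'y] at hcm
          rw [hcolB'y, ← hcolAB] at hc
          omega

include hV1 hV2 in
/-- A minimal pair consists of equal states. -/
lemma minP_eq (hall : ∀ D : Finset X, D.Nonempty → ∑ x ∈ D, α x < ∑ y ∈ Nout E D, β y)
    {A B : X → X → ℕ} (hmin : MinP E β W1 W2 A B) : A = B := by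
  funext u y
  show A u y = B u y
  have hVA := hmin.validA hV1 hV2
  rcases Nat.eq_zero_or_pos (β y) with hβ | hβ
  · have h1 : A u y = 0 := by
      have := cell_le_col A u y
      have := hVA.2.2 y
      omega
    have h2 : B u y = 0 := by
      have hVB := hmin.validB hV1 hV2
      have := cell_le_col B u y
      have := hVB.2.2 y
      omega
    omega
  · classical
    have hex : ∃ k, chainP E β A k y := chain_exists hall hVA y hβ
    set d := Nat.find hex with hd
    exact column_eq hV1 hV2 d A B hmin y (Nat.find_spec hex)
      (fun j hj => Nat.find_min hex hj) u

end Aux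

/-- Proposition 2 of the paper: under the strict Hall-type condition, the graph `L` on
complete allocation states whose edges are distribution moves is connected. -/
theorem distribution_graph_connected {X : Type*} [Fintype X] [DecidableEq X]
    (E : X → X → Prop) [DecidableRel E] (α β : X → ℕ)
    (hall : ∀ D : Finset X, D.Nonempty → ∑ x ∈ D, α x < ∑ y ∈ Nout E D, β y)
    (W1 W2 : X → X → ℕ)
    (h1supp : ∀ x y, ¬ E x y → W1 x y = 0)
    (h1row : ∀ x, ∑ y, W1 x y = α x)
    (h1col : ∀ y, col W1 y ≤ β y)
    (h2supp : ∀ x y, ¬ E x y → W2 x y = 0)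
    (h2row : ∀ x, ∑ y, W2 x y = α x)
    (h2col : ∀ y, col W2 y ≤ β y) :
    Relation.ReflTransGen (DistMove E β) W1 W2 := by
  have hV1 : Valid E α β W1 := ⟨h1supp, h1row, h1col⟩
  have hV2 : Valid E α β W2 := ⟨h2supp, h2row, h2col⟩
  obtain ⟨A, B, hmin⟩ := exists_minP (E := E) (β := β) (W1 := W1) (W2 := W2)
  have hAB : A = B := minP_eq hV1 hV2 hall hmin
  exact hmin.1.trans (hAB ▸ reach_symm hV2 hmin.2.1)
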